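/- arXiv:1902.00693 — 2 statements merged into one kernel-verified Lean document; each statement's English description precedes it below -/
import Mathlib

section
/- Let Φ : X×Y → ℝ^m be a generating function, a, b ∈ ℝ^m with a ≤ b componentwise, and assume the uncertainty set U_Φ^{a,b} is nonempty. If (α*, β*, γ*) is an optimal solution of problem (7), then the minimax expected loss satisfies R_Φ^{a,b} = inf over classification rules h of sup over p ∈ U_Φ^{a,b} of ℓ(h,p) = 1 − aᵀα* + bᵀβ* − γ*. -/
open Finset

/-- A probability distribution on `X × Y`. -/
def IsProb {X Y : Type*} [Fintype X] [Fintype Y] (p : X × Y → ℝ) : Prop :=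
  (∀ z, 0 ≤ p z) ∧ ∑ z : X × Y, p z = 1

/-- A (probabilistic) classification rule on `X × Y`. -/
def IsRule {X Y : Type*} [Fintype X] [Fintype Y] (h : X × Y → ℝ) : Prop :=
  (∀ z, 0 ≤ h z) ∧ ∀ x : X, ∑ y : Y, h (x, y) = 1

/-- Expected 0-1 loss `ℓ(h, p) = 1 - ∑ p·h`. -/
def loss {X Y : Type*} [Fintype X] [Fintype Y] (h p : X × Y → ℝ) : ℝ :=
  1 - ∑ z : X × Y, p z * h z

/-- Membership in the polyhedral uncertainty set `U_Φ^{a,b}`. -/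
def InU {X Y : Type*} [Fintype X] [Fintype Y] {m : ℕ}
    (Φ : X × Y → Fin m → ℝ) (a b : Fin m → ℝ) (p : X × Y → ℝ) : Prop :=
  IsProb p ∧ ∀ i, a i ≤ (∑ z : X × Y, p z * Φ z i) ∧ (∑ z : X × Y, p z * Φ z i) ≤ b i

/-- Feasibility for problem (7). -/
def Feas7 {X Y : Type*} [Fintype X] [Fintype Y] [Nonempty X] [Nonempty Y] {m : ℕ}
    (Φ : X × Y → Fin m → ℝ) (α β : Fin m → ℝ) (γ : ℝ) : Prop :=
  (∀ i, 0 ≤ α i) ∧ (∀ i, 0 ≤ β i) ∧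
    (Finset.univ.sup' Finset.univ_nonempty fun x : X =>
      ∑ y : Y, max (∑ i, Φ (x, y) i * (α i - β i) + γ) 0) ≤ 1

/-- Optimality for problem (7) with data `a, b`. -/
def Opt7 {X Y : Type*} [Fintype X] [Fintype Y] [Nonempty X] [Nonempty Y] {m : ℕ}
    (Φ : X × Y → Fin m → ℝ) (a b : Fin m → ℝ) (α β : Fin m → ℝ) (γ : ℝ) : Prop :=
  Feas7 Φ α β γ ∧ ∀ α' β' : Fin m → ℝ, ∀ γ' : ℝ, Feas7 Φ α' β' γ' →
    (∑ i, a i * α' i) - (∑ i, b i * β' i) + γ' ≤ (∑ i, a i * α i) - (∑ i, b i * β i) + γ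

/-! Let `V = aᵀα - bᵀβ + γ` for the optimal `(α, β, γ)`. Completing `max (Φᵀ(α - β) + γ) 0`
to a conditional distribution gives a rule `k` dominating the affine function `Φᵀ(α - β) + γ`,
so weak duality bounds its worst-case loss by `1 - V`. Conversely, if some rule `h` had
`E_p h > V` for every `p ∈ U`, separating the polytope `{(E_p Φ, E_p h)}` from the closed convex
set `[a, b] × (-∞, V]` yields an affine minorant of `h` which, split into positive and negative
parts, is feasible for (7) with value above `V`. -/

open Matrix

section Duality

variable {Z ι : Type*} [Fintype Z] [Fintype ι]

theorem apply_prod_eq_dotProduct_add [DecidableEq ι] (f : (ι → ℝ) × ℝ →L[ℝ] ℝ) (x : ι → ℝ)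
    (s : ℝ) :
    f (x, s) = x ⬝ᵥ (fun i => f (Pi.single i 1, 0)) + s * f (0, 1) := by
  have hx : f (x, 0) = x ⬝ᵥ (fun i => f (Pi.single i 1, 0)) := by
    have := LinearMap.pi_apply_eq_sum_univ (f.toLinearMap ∘ₗ LinearMap.inl ℝ (ι → ℝ) ℝ) x
    have hsingle : ∀ i : ι, (fun j => if i = j then (1 : ℝ) else 0) = Pi.single i 1 := by
      intro i; ext j; simp [Pi.single_apply, eq_comm]
    simpa [dotProduct, hsingle] using this
  have hs : f (0, s) = s * f (0, 1) := by
    simpa using f.map_smul s ((0 : ι → ℝ), (1 : ℝ))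
  rw [← hx, ← hs, ← map_add, Prod.mk_add_mk, add_zero, zero_add]

theorem exists_mem_Icc_dotProduct_eq {a b : ι → ℝ} (hab : a ≤ b) (w : ι → ℝ) :
    ∃ x ∈ Set.Icc a b, x ⬝ᵥ w = a ⬝ᵥ w⁺ - b ⬝ᵥ w⁻ := by
  classical
  refine ⟨fun i => if 0 ≤ w i then a i else b i, ⟨fun i => ?_, fun i => ?_⟩, ?_⟩
  · dsimp only; split_ifs <;> simp [hab i]
  · dsimp only; split_ifs <;> simp [hab i]
  · simp only [dotProduct, ← Finset.sum_sub_distrib, Pi.posPart_apply, Pi.negPart_apply]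
    refine Finset.sum_congr rfl fun i _ => ?_
    split_ifs with hw
    · rw [posPart_eq_self.2 hw, negPart_eq_zero.2 hw]; ring
    · rw [posPart_eq_zero.2 (not_le.1 hw).le, negPart_eq_neg.2 (not_le.1 hw).le]; ring

theorem exists_affine_lt_of_forall_lt_dotProduct {Φ : Z → ι → ℝ} {h : Z → ℝ} {a b : ι → ℝ}
    {t : ℝ} (hne : ∃ p ∈ stdSimplex ℝ Z, ∑ z, p z • Φ z ∈ Set.Icc a b)
    (ht : ∀ p ∈ stdSimplex ℝ Z, ∑ z, p z • Φ z ∈ Set.Icc a b → t < p ⬝ᵥ h) :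
    ∃ (w : ι → ℝ) (γ : ℝ), (∀ z, Φ z ⬝ᵥ w + γ < h z) ∧ ∀ x ∈ Set.Icc a b, t < x ⬝ᵥ w + γ := by
  classical
  obtain ⟨p₀, hp₀, hp₀box⟩ := hne
  set L := Fintype.linearCombination ℝ fun z => (Φ z, h z)
  have hL : ∀ p, L p = (∑ z, p z • Φ z, p ⬝ᵥ h) := fun p => by
    refine Prod.ext ?_ ?_ <;> simp [L, Fintype.linearCombination_apply, Prod.fst_sum,
      Prod.snd_sum, dotProduct]
  have hdisj : Disjoint (L '' stdSimplex ℝ Z) (Set.Icc a b ×ˢ Set.Iic t) := by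
    rw [Set.disjoint_left]
    rintro _ ⟨p, hp, rfl⟩ ⟨hbox, hle⟩
    rw [hL] at hbox hle
    exact (ht p hp hbox).not_ge hle
  obtain ⟨f, u, v, hfu, huv, hfv⟩ := geometric_hahn_banach_compact_closed
    ((convex_stdSimplex ℝ Z).linear_image L)
    ((isCompact_stdSimplex ℝ Z).image L.continuous_of_finiteDimensional)
    ((convex_Icc a b).prod (convex_Iic t)) (isClosed_Icc.prod isClosed_Iic) hdisj
  set w : ι → ℝ := fun i => f (Pi.single i 1, 0)
  set d : ℝ := f (0, 1)
  have hsimplex : ∀ p ∈ stdSimplex ℝ Z, (∑ z, p z • Φ z) ⬝ᵥ w + p ⬝ᵥ h * d < u := fun p hp => by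
    have := hfu _ ⟨p, hp, rfl⟩
    rwa [hL, apply_prod_eq_dotProduct_add] at this
  have hbox : ∀ x ∈ Set.Icc a b, ∀ s ≤ t, v < x ⬝ᵥ w + s * d := fun x hx s hs => by
    have := hfv (x, s) ⟨hx, hs⟩
    rwa [apply_prod_eq_dotProduct_add] at this
  -- if `d ≥ 0`, the box point `(moments of p₀, min t (p₀ ⬝ᵥ h))` would lie on the simplex side
  have hd : d < 0 := by
    by_contra! hd
    have h₁ := hsimplex p₀ hp₀
    have h₂ := hbox _ hp₀box (min t (p₀ ⬝ᵥ h)) (min_le_left _ _)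
    linarith [mul_le_mul_of_nonneg_right (min_le_right t (p₀ ⬝ᵥ h)) hd]
  have hval : ∀ y : ι → ℝ, y ⬝ᵥ (-d⁻¹ • w) + u / d = (u - y ⬝ᵥ w) / d := fun y => by
    rw [dotProduct_smul, smul_eq_mul]; field_simp; ring
  refine ⟨-d⁻¹ • w, u / d, fun z => ?_, fun x hx => ?_⟩
  · have hz := hsimplex _ (single_mem_stdSimplex ℝ z)
    simp only [Pi.single_apply, ite_smul, one_smul, zero_smul, Finset.sum_ite_eq',
      Finset.mem_univ, if_true, single_dotProduct, one_mul] at hz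
    rw [hval, div_lt_iff_of_neg hd]
    linarith
  · have hx' := hbox x hx t le_rfl
    rw [hval, lt_div_iff_of_neg hd]
    linarith

theorem dotProduct_affine {p : Z → ℝ} (hp : ∑ z, p z = 1) (Φ : Z → ι → ℝ) (c : ι → ℝ) (γ : ℝ) :
    p ⬝ᵥ (fun z => Φ z ⬝ᵥ c + γ) = (∑ z, p z • Φ z) ⬝ᵥ c + γ := by
  simp only [sum_dotProduct, smul_dotProduct, smul_eq_mul]
  simp only [dotProduct, mul_add, Finset.sum_add_distrib, ← Finset.sum_mul, hp, one_mul]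

theorem le_dotProduct_of_affine_le {Φ : Z → ι → ℝ} {a b α β : ι → ℝ} {γ : ℝ} {p k : Z → ℝ}
    (hp : p ∈ stdSimplex ℝ Z) (hbox : ∑ z, p z • Φ z ∈ Set.Icc a b) (hα : 0 ≤ α) (hβ : 0 ≤ β)
    (hk : ∀ z, Φ z ⬝ᵥ (α - β) + γ ≤ k z) :
    a ⬝ᵥ α - b ⬝ᵥ β + γ ≤ p ⬝ᵥ k := by
  have hαb := dotProduct_le_dotProduct_of_nonneg_right hbox.1 hα
  have hβb := dotProduct_le_dotProduct_of_nonneg_right hbox.2 hβ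
  calc a ⬝ᵥ α - b ⬝ᵥ β + γ ≤ (∑ z, p z • Φ z) ⬝ᵥ (α - β) + γ := by
        rw [dotProduct_sub]; linarith
    _ = p ⬝ᵥ (fun z => Φ z ⬝ᵥ (α - β) + γ) := (dotProduct_affine hp.2 Φ _ γ).symm
    _ ≤ p ⬝ᵥ k := dotProduct_le_dotProduct_of_nonneg_left hk hp.1

end Duality

section Classification

variable {X Y : Type*} [Fintype X] [Fintype Y] {m : ℕ} {Φ : X × Y → Fin m → ℝ}
  {a b α β : Fin m → ℝ} {γ : ℝ}

theorem inU_iff {p : X × Y → ℝ} :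
    InU Φ a b p ↔ p ∈ stdSimplex ℝ (X × Y) ∧ ∑ z, p z • Φ z ∈ Set.Icc a b := by
  simp only [InU, IsProb, Set.mem_Icc, Pi.le_def, Finset.sum_apply, Pi.smul_apply, smul_eq_mul,
    forall_and]
  rfl

theorem bddAbove_loss (h : X × Y → ℝ) (hh : IsRule h) :
    BddAbove {s | ∃ p, InU Φ a b p ∧ s = loss h p} := by
  refine ⟨1, ?_⟩
  rintro _ ⟨p, hp, rfl⟩
  exact sub_le_self _ (dotProduct_nonneg_of_nonneg hp.1.1 hh.1)

variable (Φ a b) in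
noncomputable def worstCaseLoss (h : X × Y → ℝ) : ℝ :=
  sSup {s | ∃ p, InU Φ a b p ∧ s = loss h p}

theorem worstCaseLoss_le (hU : ∃ p, InU Φ a b p) (hα : 0 ≤ α) (hβ : 0 ≤ β) {k : X × Y → ℝ}
    (hk : ∀ z, Φ z ⬝ᵥ (α - β) + γ ≤ k z) :
    worstCaseLoss Φ a b k ≤ 1 - (a ⬝ᵥ α - b ⬝ᵥ β + γ) := by
  obtain ⟨p₀, hp₀⟩ := hU
  refine csSup_le ⟨_, p₀, hp₀, rfl⟩ ?_
  rintro _ ⟨p, hp, rfl⟩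
  obtain ⟨hp, hbox⟩ := inU_iff.1 hp
  exact sub_le_sub_left (le_dotProduct_of_affine_le hp hbox hα hβ hk) 1

variable [Nonempty X] [Nonempty Y]

theorem feas7_of_le_isRule {h : X × Y → ℝ} (hα : 0 ≤ α) (hβ : 0 ≤ β) (hh : IsRule h)
    (hle : ∀ z, Φ z ⬝ᵥ (α - β) + γ ≤ h z) : Feas7 Φ α β γ := by
  refine ⟨hα, hβ, (Finset.sup'_le_iff _ _).2 fun x _ => ?_⟩
  calc ∑ y, max (Φ (x, y) ⬝ᵥ (α - β) + γ) 0 ≤ ∑ y, h (x, y) :=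
        Finset.sum_le_sum fun y _ => max_le (hle (x, y)) (hh.1 (x, y))
    _ = 1 := hh.2 x

theorem Feas7.exists_isRule_le (hf : Feas7 Φ α β γ) :
    ∃ k : X × Y → ℝ, IsRule k ∧ ∀ z, Φ z ⬝ᵥ (α - β) + γ ≤ k z := by
  set g : X × Y → ℝ := fun z => max (Φ z ⬝ᵥ (α - β) + γ) 0
  have hcard : (0 : ℝ) < Fintype.card Y := mod_cast Fintype.card_pos
  have hrow : ∀ x : X, ∑ y, g (x, y) ≤ 1 := fun x =>
    (Finset.sup'_le_iff _ _).1 hf.2.2 x (mem_univ x)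
  -- spread the unused mass of each row uniformly over `Y`
  have hslack : ∀ x : X, 0 ≤ (1 - ∑ y, g (x, y)) / Fintype.card Y := fun x =>
    div_nonneg (sub_nonneg.2 (hrow x)) hcard.le
  refine ⟨fun z => g z + (1 - ∑ y, g (z.1, y)) / Fintype.card Y, ⟨fun z => ?_, fun x => ?_⟩,
    fun z => ?_⟩
  · exact add_nonneg (le_max_right _ _) (hslack z.1)
  · dsimp only
    rw [Finset.sum_add_distrib, Finset.sum_const, Finset.card_univ, nsmul_eq_mul]
    field_simp
    ring
  · exact (le_max_left _ _).trans (le_add_of_nonneg_right (hslack z.1))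

theorem Opt7.exists_inU_dotProduct_le (hopt : Opt7 Φ a b α β γ) (hU : ∃ p, InU Φ a b p)
    {h : X × Y → ℝ} (hh : IsRule h) :
    ∃ p, InU Φ a b p ∧ p ⬝ᵥ h ≤ a ⬝ᵥ α - b ⬝ᵥ β + γ := by
  by_contra! hlt
  obtain ⟨p₀, hp₀⟩ := hU
  obtain ⟨w, γ', hw, hwbox⟩ := exists_affine_lt_of_forall_lt_dotProduct ⟨p₀, inU_iff.1 hp₀⟩
    fun p hp hbox => hlt p (inU_iff.2 ⟨hp, hbox⟩)
  have hab : a ≤ b := fun i => (hp₀.2 i).1.trans (hp₀.2 i).2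
  obtain ⟨x, hx, hxw⟩ := exists_mem_Icc_dotProduct_eq hab w
  have hfeas : Feas7 Φ w⁺ w⁻ γ' := feas7_of_le_isRule (posPart_nonneg w) (negPart_nonneg w) hh
    fun z => by rw [posPart_sub_negPart]; exact (hw z).le
  have hle : a ⬝ᵥ w⁺ - b ⬝ᵥ w⁻ + γ' ≤ a ⬝ᵥ α - b ⬝ᵥ β + γ := hopt.2 _ _ _ hfeas
  linarith [hwbox x hx]

theorem one_sub_le_worstCaseLoss (hopt : Opt7 Φ a b α β γ) (hU : ∃ p, InU Φ a b p)
    {h : X × Y → ℝ} (hh : IsRule h) :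
    1 - (a ⬝ᵥ α - b ⬝ᵥ β + γ) ≤ worstCaseLoss Φ a b h := by
  obtain ⟨p, hp, hle⟩ := hopt.exists_inU_dotProduct_le hU hh
  exact le_csSup_of_le (bddAbove_loss h hh) ⟨p, hp, rfl⟩ (sub_le_sub_left hle 1)

end Classification

theorem lpc_minimax_value_general {X Y : Type*} [Fintype X] [Fintype Y] [Nonempty X] [Nonempty Y]
    {m : ℕ} (Φ : X × Y → Fin m → ℝ) (a b : Fin m → ℝ)
    (hU : ∃ p, InU Φ a b p)
    (α β : Fin m → ℝ) (γ : ℝ) (hopt : Opt7 Φ a b α β γ) :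
    sInf {r | ∃ h : X × Y → ℝ, IsRule h ∧
        r = sSup {s | ∃ p, InU Φ a b p ∧ s = loss h p}} =
      1 - (∑ i, a i * α i) + (∑ i, b i * β i) - γ := by
  obtain ⟨k, hk, hdom⟩ := hopt.1.exists_isRule_le
  have hleast : IsLeast {r | ∃ h : X × Y → ℝ, IsRule h ∧ r = worstCaseLoss Φ a b h}
      (1 - (a ⬝ᵥ α - b ⬝ᵥ β + γ)) := by
    refine ⟨⟨k, hk, le_antisymm ?_ ?_⟩, ?_⟩
    · exact one_sub_le_worstCaseLoss hopt hU hk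
    · exact worstCaseLoss_le hU hopt.1.1 hopt.1.2.1 hdom
    · rintro _ ⟨h, hh, rfl⟩
      exact one_sub_le_worstCaseLoss hopt hU hh
  calc _ = 1 - (a ⬝ᵥ α - b ⬝ᵥ β + γ) := hleast.csInf_eq
    _ = _ := by unfold dotProduct; ring

/-- the minimax expected loss equals `1 - aᵀα* + bᵀβ* - γ*` for any
optimal solution `(α*, β*, γ*)` of problem (7). -/
theorem lpc_minimax_value {X Y : Type*} [Fintype X] [Fintype Y] [Nonempty X] [Nonempty Y]
    {m : ℕ} (Φ : X × Y → Fin m → ℝ) (a b : Fin m → ℝ) (hab : ∀ i, a i ≤ b i)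
    (hU : ∃ p, InU Φ a b p)
    (α β : Fin m → ℝ) (γ : ℝ) (hopt : Opt7 Φ a b α β γ) :
    sInf {r | ∃ h : X × Y → ℝ, IsRule h ∧
        r = sSup {s | ∃ p, InU Φ a b p ∧ s = loss h p}} =
      1 - (∑ i, a i * α i) + (∑ i, b i * β i) - γ :=
  lpc_minimax_value_general Φ a b hU α β γ hopt
end

section
/- Let Φ : X×Y → ℝ^m be a generating function and a, b ∈ ℝ^m with a ≤ b componentwise, and assume U_Φ^{a,b} is nonempty. Then the minimax expected loss equals the maximin value: inf over classification rules h of sup over p ∈ U_Φ^{a,b} of ℓ(h,p) = 1 − inf over p ∈ U_Φ^{a,b} of Σ_{x∈X} max_{y∈Y} p(x,y). -/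
open Finset

/-! By Sion's minimax theorem the loss, which is affine in each argument, has a saddle point
`(h₀, p₀)` on the compact convex sets of rules and of distributions in `U`. Against a fixed `p`
the best rule is the deterministic one choosing an argmax of `p (x, ·)`, with loss
`1 - mixedNorm p`. Comparing with the saddle point shows that `p₀` minimises the mixed norm on
`U`, that `h₀` has worst-case loss `1 - mixedNorm p₀`, and that no rule does better against `p₀`.
-/

section

variable {X Y : Type*} [Fintype X] [Fintype Y]

noncomputable def mixedNorm [Nonempty Y] (p : X × Y → ℝ) : ℝ :=
  ∑ x : X, univ.sup' univ_nonempty fun y : Y => p (x, y)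

lemma loss_le_one {h p : X × Y → ℝ} (hh : ∀ z, 0 ≤ h z) (hp : ∀ z, 0 ≤ p z) : loss h p ≤ 1 := by
  have : 0 ≤ ∑ z, p z * h z := sum_nonneg fun z _ => mul_nonneg (hp z) (hh z)
  rw [loss]
  linarith

lemma sum_mul_le_mixedNorm [Nonempty Y] {h : X × Y → ℝ} (hh : IsRule h) (p : X × Y → ℝ) :
    ∑ z, p z * h z ≤ mixedNorm p := by
  rw [Fintype.sum_prod_type, mixedNorm]
  refine sum_le_sum fun x _ => ?_
  calc ∑ y, p (x, y) * h (x, y)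
      ≤ ∑ y, (univ.sup' univ_nonempty fun y' => p (x, y')) * h (x, y) :=
        sum_le_sum fun y _ =>
          mul_le_mul_of_nonneg_right (le_sup' (fun y' => p (x, y')) (mem_univ y)) (hh.1 _)
    _ = univ.sup' univ_nonempty fun y => p (x, y) := by rw [← mul_sum, hh.2 x, mul_one]

lemma one_sub_mixedNorm_le_loss [Nonempty Y] {h : X × Y → ℝ} (hh : IsRule h) (p : X × Y → ℝ) :
    1 - mixedNorm p ≤ loss h p := by
  have := sum_mul_le_mixedNorm hh p
  rw [loss]
  linarith

lemma exists_isRule_loss_eq_one_sub_mixedNorm [Nonempty Y] (p : X × Y → ℝ) :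
    ∃ h, IsRule h ∧ loss h p = 1 - mixedNorm p := by
  classical
  choose d hd using fun x : X => exists_mem_eq_sup' univ_nonempty fun y : Y => p (x, y)
  refine ⟨fun z => if z.2 = d z.1 then 1 else 0, ⟨fun z => by positivity, fun x => by simp⟩, ?_⟩
  simp [loss, mixedNorm, Fintype.sum_prod_type, (hd _).2]

lemma setOf_isRule_eq :
    {h : X × Y → ℝ | IsRule h} = ⋂ x : X, (fun h y => h (x, y)) ⁻¹' stdSimplex ℝ Y := by
  ext h
  simp [IsRule, stdSimplex, Prod.forall, forall_and]

lemma convex_setOf_isRule : Convex ℝ {h : X × Y → ℝ | IsRule h} := by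
  rw [setOf_isRule_eq]
  exact convex_iInter fun x =>
    (convex_stdSimplex ℝ Y).linear_preimage (LinearMap.funLeft ℝ ℝ (Prod.mk x))

lemma isCompact_setOf_isRule : IsCompact {h : X × Y → ℝ | IsRule h} := by
  refine (isCompact_Icc (a := 0) (b := 1)).of_isClosed_subset ?_ ?_
  · rw [setOf_isRule_eq]
    exact isClosed_iInter fun x => (isClosed_stdSimplex ℝ Y).preimage (by fun_prop)
  · intro h hh
    rw [setOf_isRule_eq, Set.mem_iInter] at hh
    exact ⟨fun z => (mem_Icc_of_mem_stdSimplex (hh z.1) z.2).1,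
      fun z => (mem_Icc_of_mem_stdSimplex (hh z.1) z.2).2⟩

variable {m : ℕ} (Φ : X × Y → Fin m → ℝ) (a b : Fin m → ℝ)

lemma setOf_inU_eq : {p | InU Φ a b p} =
    stdSimplex ℝ (X × Y) ∩ ⋂ i, (fun p => ∑ z, p z * Φ z i) ⁻¹' Set.Icc (a i) (b i) := by
  ext p
  simp [InU, IsProb, stdSimplex]

lemma convex_setOf_inU : Convex ℝ {p | InU Φ a b p} := by
  rw [setOf_inU_eq]
  exact (convex_stdSimplex ℝ _).inter <| convex_iInter fun i =>
    (convex_Icc _ _).linear_preimage ((dotProductBilin ℝ ℝ).flip fun z => Φ z i)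

lemma isCompact_setOf_inU : IsCompact {p | InU Φ a b p} := by
  rw [setOf_inU_eq]
  exact (isCompact_stdSimplex ℝ _).of_isClosed_subset
    ((isClosed_stdSimplex ℝ _).inter <|
      isClosed_iInter fun i => isClosed_Icc.preimage (by fun_prop))
    Set.inter_subset_left

lemma exists_isSaddlePointOn_loss [Nonempty Y] (hU : ∃ p, InU Φ a b p) :
    ∃ h ∈ {h | IsRule h}, ∃ p ∈ {p | InU Φ a b p},
      IsSaddlePointOn {h | IsRule h} {p | InU Φ a b p} loss h p := by
  obtain ⟨h₀, hh₀, -⟩ := exists_isRule_loss_eq_one_sub_mixedNorm (0 : X × Y → ℝ)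
  refine Sion.exists_isSaddlePointOn ⟨h₀, hh₀⟩ convex_setOf_isRule isCompact_setOf_isRule
    (fun p _ => ?_) (fun p _ => ?_) (convex_setOf_inU Φ a b) hU (isCompact_setOf_inU Φ a b)
    (fun h _ => ?_) (fun h _ => ?_)
  · exact (continuous_const.sub (by fun_prop)).lowerSemicontinuous.lowerSemicontinuousOn _
  · exact ((convexOn_const 1 convex_univ).sub
      ((dotProductBilin ℝ ℝ p).concaveOn convex_univ)).subset (Set.subset_univ _)
      convex_setOf_isRule |>.quasiconvexOn
  · exact (continuous_const.sub (by fun_prop)).upperSemicontinuous.upperSemicontinuousOn _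
  · exact ((concaveOn_const 1 convex_univ).sub
      (((dotProductBilin ℝ ℝ).flip h).convexOn convex_univ)).subset (Set.subset_univ _)
      (convex_setOf_inU Φ a b) |>.quasiconcaveOn

end

theorem lpc_minimax_eq_maximin_general {X Y : Type*} [Fintype X] [Fintype Y] [Nonempty Y]
    {m : ℕ} (Φ : X × Y → Fin m → ℝ) (a b : Fin m → ℝ)
    (hU : ∃ p, InU Φ a b p) :
    sInf {r | ∃ h : X × Y → ℝ, IsRule h ∧
        r = sSup {s | ∃ p, InU Φ a b p ∧ s = loss h p}} =
      1 - sInf {r | ∃ p, InU Φ a b p ∧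
        r = ∑ x : X, Finset.univ.sup' Finset.univ_nonempty fun y : Y => p (x, y)} := by
  obtain ⟨h₀, hh₀, p₀, hp₀, hsaddle⟩ := exists_isSaddlePointOn_loss Φ a b hU
  obtain ⟨d, hd, hdp₀⟩ := exists_isRule_loss_eq_one_sub_mixedNorm p₀
  have hloss_le (p) (hp : InU Φ a b p) : loss h₀ p ≤ 1 - mixedNorm p₀ :=
    hdp₀ ▸ hsaddle d hd p hp
  have hmin (p) (hp : InU Φ a b p) : mixedNorm p₀ ≤ mixedNorm p := by
    linarith [one_sub_mixedNorm_le_loss hh₀ p, hloss_le p hp]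
  have hsup (h : X × Y → ℝ) (hh : IsRule h) :
      1 - mixedNorm p₀ ≤ sSup {s | ∃ p, InU Φ a b p ∧ s = loss h p} :=
    le_csSup_of_le ⟨1, by rintro _ ⟨p, hp, rfl⟩; exact loss_le_one hh.1 hp.1.1⟩ ⟨p₀, hp₀, rfl⟩
      (one_sub_mixedNorm_le_loss hh p₀)
  have hsup₀ : sSup {s | ∃ p, InU Φ a b p ∧ s = loss h₀ p} = 1 - mixedNorm p₀ :=
    le_antisymm (csSup_le ⟨_, p₀, hp₀, rfl⟩ (by rintro _ ⟨p, hp, rfl⟩; exact hloss_le p hp))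
      (hsup h₀ hh₀)
  have hinf : sInf {r | ∃ p, InU Φ a b p ∧ r = mixedNorm p} = mixedNorm p₀ :=
    IsLeast.csInf_eq ⟨⟨p₀, hp₀, rfl⟩, by rintro _ ⟨p, hp, rfl⟩; exact hmin p hp⟩
  change _ = 1 - sInf {r | ∃ p, InU Φ a b p ∧ r = mixedNorm p}
  rw [hinf]
  exact IsLeast.csInf_eq ⟨⟨h₀, hh₀, hsup₀.symm⟩, by rintro _ ⟨h, hh, rfl⟩; exact hsup h hh⟩

/-- the minimax expected loss equals the maximin value
`1 - inf_{p ∈ U} ∑_x max_y p(x,y)`. -/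
theorem lpc_minimax_eq_maximin {X Y : Type*} [Fintype X] [Fintype Y] [Nonempty X] [Nonempty Y]
    {m : ℕ} (Φ : X × Y → Fin m → ℝ) (a b : Fin m → ℝ) (hab : ∀ i, a i ≤ b i)
    (hU : ∃ p, InU Φ a b p) :
    sInf {r | ∃ h : X × Y → ℝ, IsRule h ∧
        r = sSup {s | ∃ p, InU Φ a b p ∧ s = loss h p}} =
      1 - sInf {r | ∃ p, InU Φ a b p ∧
        r = ∑ x : X, Finset.univ.sup' Finset.univ_nonempty fun y : Y => p (x, y)} :=
  lpc_minimax_eq_maximin_general Φ a b hU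
end
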